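/- Assume Condition 2 (quasi-spiked covariance structure): λ_k ≥ λ_{k+1} + d and λ_{k+1} − λ_p ≤ ε for some d, ε > 0. Decompose δ = δ_1 + δ_2 with δ_1 ∈ W_1 = span{ξ_1, ..., ξ_k} and δ_2 ∈ W_2 = span{ξ_{k+1}, ..., ξ_p}, and assume δ_2 ≠ 0. Let W = W_1 ⊕ span{δ_2}. Then for every w ∈ W with ||w||_2 = 1 one has w^T Σ^tot w ≥ λ_p + d̃, where d̃ = d·ρ||δ_2||_2^2/(d + ρ||δ||_2^2). (Inequality (a6) in the proof of Lemma 4) -/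
import Mathlib


open Matrix

private lemma scalar_core_a6 (d ρ A B S2 c t : ℝ) (hd : 0 < d) (hρ : 0 < ρ) (hA : 0 ≤ A)
    (hB : 0 < B) (hS2 : 0 ≤ S2) (hunit : S2 + c^2 * B = 1) (hcs : t^2 ≤ S2 * A) :
    d * ρ * B / (d + ρ * (A + B)) ≤ d * S2 + ρ * (t + c * B)^2 := by
  have hL : 0 < d + ρ * (A + B) := by positivity
  rw [div_le_iff₀ hL]
  set u := t + c * B with hu
  have key : 0 ≤ d^2 * S2 + ρ^2 * A * u^2 + 2*d*ρ*u*t := by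
    rcases le_or_gt 0 (u * t) with h | h
    · have h1 : 0 ≤ 2*d*ρ*(u*t) := by positivity
      have h2 : 0 ≤ ρ^2 * A * u^2 := by positivity
      have h3 : 0 ≤ d^2 * S2 := by positivity
      nlinarith
    · have hnn : 0 ≤ d^2 * S2 + ρ^2 * A * u^2 := by positivity
      have h4 : 0 ≤ 4*d^2*ρ^2*u^2 := by positivity
      have h1 : (2*d*ρ*u*t)^2 ≤ (d^2 * S2 + ρ^2 * A * u^2)^2 := by
        nlinarith [sq_nonneg (d^2*S2 - ρ^2*A*u^2), mul_le_mul_of_nonneg_left hcs h4]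
      nlinarith [h1, hnn]
  have hid : (d*S2 + ρ*u^2)*(d+ρ*(A+B)) =
      d*ρ*B*(S2+c^2*B) + (d^2*S2 + ρ^2*A*u^2 + 2*d*ρ*u*t)
      + d*ρ*(S2*A - t^2) + ρ^2*B*u^2 := by rw [hu]; ring
  have h5 : 0 ≤ d*ρ*(S2*A - t^2) := by
    have := sub_nonneg.mpr hcs; positivity
  have h6 : 0 ≤ ρ^2*B*u^2 := by positivity
  rw [hunit, mul_one] at hid
  linarith [key, h5, h6]

private lemma sum_dotProduct_a6 {n m : ℕ} (f : Fin n → Fin m → ℝ) (v : Fin m → ℝ) :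
    (∑ i, f i) ⬝ᵥ v = ∑ i, f i ⬝ᵥ v := by
  simp only [dotProduct, Finset.sum_apply, Finset.sum_mul]
  exact Finset.sum_comm

private lemma dotProduct_sum_a6 {n m : ℕ} (v : Fin m → ℝ) (f : Fin n → Fin m → ℝ) :
    v ⬝ᵥ (∑ i, f i) = ∑ i, v ⬝ᵥ f i := by
  simp only [dotProduct, Finset.sum_apply, Finset.mul_sum]
  exact Finset.sum_comm

private lemma dot_expand_a6 {p m n : ℕ} (xi : Fin p → Fin p → ℝ)
    (horth : ∀ i j : Fin p, xi i ⬝ᵥ xi j = if i = j then (1 : ℝ) else 0)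
    (f : Fin m → Fin p) (g : Fin n → Fin p) (a : Fin m → ℝ) (b : Fin n → ℝ) :
    (∑ i, a i • xi (f i)) ⬝ᵥ (∑ j, b j • xi (g j))
      = ∑ i, ∑ j, if f i = g j then a i * b j else 0 := by
  rw [sum_dotProduct_a6]
  refine Finset.sum_congr rfl fun i _ => ?_
  rw [smul_dotProduct, dotProduct_sum_a6, smul_eq_mul, Finset.mul_sum]
  refine Finset.sum_congr rfl fun j _ => ?_
  rw [dotProduct_smul, smul_eq_mul, horth]
  split_ifs with h <;> ring

private lemma dot_expand_same_a6 {p m : ℕ} (xi : Fin p → Fin p → ℝ)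
    (horth : ∀ i j : Fin p, xi i ⬝ᵥ xi j = if i = j then (1 : ℝ) else 0)
    (f : Fin m → Fin p) (hf : Function.Injective f) (a b : Fin m → ℝ) :
    (∑ i, a i • xi (f i)) ⬝ᵥ (∑ j, b j • xi (f j)) = ∑ i, a i * b i := by
  rw [dot_expand_a6 xi horth f f a b]
  refine Finset.sum_congr rfl fun i _ => ?_
  rw [Finset.sum_eq_single i (fun j _ hj => if_neg fun h => hj ((hf h).symm))
    (fun h => absurd (Finset.mem_univ i) h)]
  simp

private lemma dot_expand_disj_a6 {p m n : ℕ} (xi : Fin p → Fin p → ℝ)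
    (horth : ∀ i j : Fin p, xi i ⬝ᵥ xi j = if i = j then (1 : ℝ) else 0)
    (f : Fin m → Fin p) (g : Fin n → Fin p) (hfg : ∀ i j, f i ≠ g j) (a : Fin m → ℝ)
    (b : Fin n → ℝ) :
    (∑ i, a i • xi (f i)) ⬝ᵥ (∑ j, b j • xi (g j)) = 0 := by
  rw [dot_expand_a6 xi horth f g a b]
  exact Finset.sum_eq_zero fun i _ => Finset.sum_eq_zero fun j _ => if_neg (hfg i j)

private lemma mulVec_eig_a6 {p m : ℕ} (S : Matrix (Fin p) (Fin p) ℝ) (lam : Fin p → ℝ)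
    (xi : Fin p → Fin p → ℝ) (heig : ∀ j, S.mulVec (xi j) = lam j • xi j)
    (f : Fin m → Fin p) (a : Fin m → ℝ) :
    S.mulVec (∑ i, a i • xi (f i)) = ∑ i, (a i * lam (f i)) • xi (f i) := by
  rw [← S.mulVecLin_apply, map_sum]
  refine Finset.sum_congr rfl fun i _ => ?_
  rw [_root_.map_smul, S.mulVecLin_apply, heig, smul_smul]

private lemma vecMulVec_mulVec_a6 {p : ℕ} (δ w : Fin p → ℝ) :
    (vecMulVec δ δ).mulVec w = (δ ⬝ᵥ w) • δ := by
  funext i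
  simp only [mulVec, vecMulVec_apply, dotProduct, Pi.smul_apply, smul_eq_mul, Finset.sum_mul,
    Finset.mul_sum]
  exact Finset.sum_congr rfl fun j _ => by ring

set_option maxHeartbeats 1000000 in
/-- Inequality (a6) in the proof of Lemma 4: under Condition 2, with
`δ = δ₁ + δ₂`, `δ₂ ≠ 0` and `W = W₁ ⊕ span{δ₂}`, every unit vector `w ∈ W`
satisfies `wᵀ Σᵗᵒᵗ w ≥ λ_p + d̃`, where `d̃ = d·ρ‖δ₂‖₂²/(d + ρ‖δ‖₂²)`. -/
theorem quadratic_form_lower_bound_on_W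
    {p k : ℕ} (hk : 1 ≤ k) (hkp : k < p)
    (S : Matrix (Fin p) (Fin p) ℝ) (hS : S.IsSymm)
    (lam : Fin p → ℝ) (xi : Fin p → (Fin p → ℝ))
    (hpos : ∀ j, 0 < lam j)
    (hdesc : ∀ i j : Fin p, i ≤ j → lam j ≤ lam i)
    (horth : ∀ i j : Fin p, xi i ⬝ᵥ xi j = if i = j then (1 : ℝ) else 0)
    (heig : ∀ j, S.mulVec (xi j) = lam j • xi j)
    (δ : Fin p → ℝ) (ρ : ℝ) (hρ : 0 < ρ)
    -- Condition 2 (quasi-spiked covariance structure)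
    (d ε : ℝ) (hd : 0 < d) (hε : 0 < ε)
    (hgap : lam ⟨k, hkp⟩ + d ≤ lam ⟨k - 1, by omega⟩)
    (hquasi : lam ⟨k, hkp⟩ - lam ⟨p - 1, by omega⟩ ≤ ε)
    -- decomposition δ = δ₁ + δ₂ with δ₂ ≠ 0
    (δ1 δ2 : Fin p → ℝ) (hdec : δ = δ1 + δ2)
    (hδ1 : δ1 ∈ Submodule.span ℝ
      (Set.range fun i : Fin k => xi ⟨i.1, lt_trans i.isLt hkp⟩))
    (hδ2 : δ2 ∈ Submodule.span ℝ
      (Set.range fun i : Fin (p - k) => xi ⟨k + i.1, by omega⟩))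
    (hδ2ne : δ2 ≠ 0)
    (dt : ℝ)
    (hdt : dt = d * ρ * (∑ i, δ2 i ^ 2) / (d + ρ * ∑ i, δ i ^ 2)) :
    ∀ w : Fin p → ℝ,
      w ∈ Submodule.span ℝ
        (insert δ2 (Set.range fun i : Fin k => xi ⟨i.1, lt_trans i.isLt hkp⟩)) →
      (∑ i, w i ^ 2) = 1 →
      lam ⟨p - 1, by omega⟩ + dt ≤ w ⬝ᵥ (S + ρ • vecMulVec δ δ).mulVec w := by
  intro w hw hwnorm
  have hp1 : p - 1 < p := by omega
  have hk1 : k - 1 < p := by omega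
  -- index embeddings
  have hf1inj : Function.Injective (fun i : Fin k => (⟨i.1, lt_trans i.isLt hkp⟩ : Fin p)) := by
    intro i j h
    simpa [Fin.ext_iff] using h
  have hf2inj : Function.Injective (fun i : Fin (p - k) => (⟨k + i.1, by omega⟩ : Fin p)) := by
    intro i j h
    simp only [Fin.mk.injEq, add_right_inj] at h
    exact Fin.ext h
  have hdisj : ∀ (i : Fin k) (j : Fin (p - k)),
      (⟨i.1, lt_trans i.isLt hkp⟩ : Fin p) ≠ ⟨k + j.1, by omega⟩ := by
    intro i j h
    have hi := i.isLt
    simp only [Fin.mk.injEq] at h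
    omega
  -- coefficients
  obtain ⟨c1, hc1⟩ := (Submodule.mem_span_range_iff_exists_fun ℝ).mp hδ1
  obtain ⟨bb, hbb⟩ := (Submodule.mem_span_range_iff_exists_fun ℝ).mp hδ2
  rw [Submodule.mem_span_insert] at hw
  obtain ⟨c, z, hz, hwz⟩ := hw
  obtain ⟨a, ha⟩ := (Submodule.mem_span_range_iff_exists_fun ℝ).mp hz
  -- abbreviations
  set A := ∑ i, c1 i ^ 2 with hA
  set Bv := ∑ i, bb i ^ 2 with hBv
  set S2 := ∑ i, a i ^ 2 with hS2
  set t := ∑ i, a i * c1 i with ht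
  have hsq : ∀ {m : ℕ} (v : Fin m → ℝ), ∑ i, v i * v i = ∑ i, v i ^ 2 :=
    fun v => Finset.sum_congr rfl fun i _ => (sq (v i)).symm
  -- basic dot products
  have hzz : z ⬝ᵥ z = S2 := by
    rw [← ha, dot_expand_same_a6 xi horth _ hf1inj a a]; exact hsq a
  have hδ1δ1 : δ1 ⬝ᵥ δ1 = A := by
    rw [← hc1, dot_expand_same_a6 xi horth _ hf1inj c1 c1]; exact hsq c1
  have hδ2δ2 : δ2 ⬝ᵥ δ2 = Bv := by
    rw [← hbb, dot_expand_same_a6 xi horth _ hf2inj bb bb]; exact hsq bb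
  have hzδ1 : z ⬝ᵥ δ1 = t := by
    rw [← ha, ← hc1]; exact dot_expand_same_a6 xi horth _ hf1inj a c1
  have hzδ2 : z ⬝ᵥ δ2 = 0 := by
    rw [← ha, ← hbb]; exact dot_expand_disj_a6 xi horth _ _ hdisj a bb
  have hδ2z : δ2 ⬝ᵥ z = 0 := by rw [dotProduct_comm]; exact hzδ2
  have hδ1δ2 : δ1 ⬝ᵥ δ2 = 0 := by
    rw [← hc1, ← hbb]; exact dot_expand_disj_a6 xi horth _ _ hdisj c1 bb
  have hδ2δ1 : δ2 ⬝ᵥ δ1 = 0 := by rw [dotProduct_comm]; exact hδ1δ2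
  -- S-quadratic forms
  have hSz : S.mulVec z = ∑ i : Fin k,
      (a i * lam ⟨i.1, lt_trans i.isLt hkp⟩) • xi ⟨i.1, lt_trans i.isLt hkp⟩ := by
    rw [← ha]; exact mulVec_eig_a6 S lam xi heig _ a
  have hSδ2 : S.mulVec δ2 = ∑ i : Fin (p - k),
      (bb i * lam ⟨k + i.1, by omega⟩) • xi ⟨k + i.1, by omega⟩ := by
    rw [← hbb]; exact mulVec_eig_a6 S lam xi heig _ bb
  have hzSz : z ⬝ᵥ S.mulVec z = ∑ i : Fin k, a i * (a i * lam ⟨i.1, lt_trans i.isLt hkp⟩) := by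
    rw [hSz, ← ha]; exact dot_expand_same_a6 xi horth _ hf1inj a _
  have hδ2Sδ2 : δ2 ⬝ᵥ S.mulVec δ2
      = ∑ i : Fin (p - k), bb i * (bb i * lam ⟨k + i.1, by omega⟩) := by
    rw [hSδ2, ← hbb]; exact dot_expand_same_a6 xi horth _ hf2inj bb _
  have hzSδ2 : z ⬝ᵥ S.mulVec δ2 = 0 := by
    rw [hSδ2, ← ha]; exact dot_expand_disj_a6 xi horth _ _ hdisj a _
  have hdisj2 : ∀ (i : Fin (p - k)) (j : Fin k),
      (⟨k + i.1, by omega⟩ : Fin p) ≠ ⟨j.1, lt_trans j.isLt hkp⟩ :=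
    fun i j h => hdisj j i h.symm
  have hδ2Sz : δ2 ⬝ᵥ S.mulVec z = 0 := by
    rw [hSz, ← hbb]; exact dot_expand_disj_a6 xi horth _ _ hdisj2 bb _
  -- norms and positivity facts
  have hwdot : w ⬝ᵥ w = c ^ 2 * Bv + S2 := by
    rw [hwz]
    simp only [add_dotProduct, dotProduct_add, smul_dotProduct, dotProduct_smul, smul_eq_mul,
      hδ2δ2, hδ2z, hzδ2, hzz]
    ring
  have hunit : S2 + c ^ 2 * Bv = 1 := by
    have : w ⬝ᵥ w = ∑ i, w i ^ 2 := hsq w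
    rw [hwdot] at this
    linarith [this.trans hwnorm]
  have hBpos : 0 < Bv := by
    have h0 : δ2 ⬝ᵥ δ2 ≠ 0 := fun h => hδ2ne (dotProduct_self_eq_zero.mp h)
    have h1 : 0 ≤ Bv := Finset.sum_nonneg fun i _ => sq_nonneg _
    rcases h1.lt_or_eq with h | h
    · exact h
    · exact absurd (hδ2δ2.trans h.symm) h0
  have hAnn : 0 ≤ A := Finset.sum_nonneg fun i _ => sq_nonneg _
  have hS2nn : 0 ≤ S2 := Finset.sum_nonneg fun i _ => sq_nonneg _
  have hcs : t ^ 2 ≤ S2 * A := Finset.sum_mul_sq_le_sq_mul_sq Finset.univ a c1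
  -- rewrite dt
  have hδsq : (∑ i, δ i ^ 2) = A + Bv := by
    have : δ ⬝ᵥ δ = A + Bv := by
      rw [hdec]
      simp only [add_dotProduct, dotProduct_add, hδ1δ1, hδ1δ2, hδ2δ1, hδ2δ2]
      ring
    rw [← hsq δ]; exact this
  have hδ2sq : (∑ i, δ2 i ^ 2) = Bv := by rw [← hsq δ2]; exact hδ2δ2
  have hdt' : dt = d * ρ * Bv / (d + ρ * (A + Bv)) := by rw [hdt, hδsq, hδ2sq]
  -- eigenvalue bounds
  have hlamk : lam ⟨k, hkp⟩ ≥ lam ⟨p - 1, hp1⟩ := hdesc ⟨k, hkp⟩ ⟨p - 1, hp1⟩ (by simp; omega)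
  have hb1 : ∀ i : Fin k, lam ⟨p - 1, hp1⟩ + d ≤ lam ⟨i.1, lt_trans i.isLt hkp⟩ := by
    intro i
    have h1 : lam ⟨k - 1, hk1⟩ ≤ lam ⟨i.1, lt_trans i.isLt hkp⟩ := by
      refine hdesc _ _ ?_
      have := i.isLt
      simp only [Fin.mk_le_mk]
      omega
    have h2 : lam ⟨k - 1, by omega⟩ = lam ⟨k - 1, hk1⟩ := rfl
    linarith [hgap, hlamk, h1]
  have hb2 : ∀ i : Fin (p - k), lam ⟨p - 1, hp1⟩ ≤ lam (⟨k + i.1, by omega⟩ : Fin p) := by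
    intro i
    refine hdesc _ _ ?_
    have := i.isLt
    simp only [Fin.mk_le_mk]
    omega
  -- sum bounds
  have hsum1 : (lam ⟨p - 1, hp1⟩ + d) * S2
      ≤ ∑ i : Fin k, a i * (a i * lam ⟨i.1, lt_trans i.isLt hkp⟩) := by
    rw [hS2, Finset.mul_sum]
    refine Finset.sum_le_sum fun i _ => ?_
    nlinarith [hb1 i, sq_nonneg (a i)]
  have hsum2 : lam ⟨p - 1, hp1⟩ * Bv
      ≤ ∑ i : Fin (p - k), bb i * (bb i * lam ⟨k + i.1, by omega⟩) := by
    rw [hBv, Finset.mul_sum]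
    refine Finset.sum_le_sum fun i _ => ?_
    nlinarith [hb2 i, sq_nonneg (bb i)]
  -- expand the quadratic form
  have hwδ : δ ⬝ᵥ w = t + c * Bv := by
    rw [hwz, hdec]
    simp only [add_dotProduct, dotProduct_add, dotProduct_smul, smul_eq_mul,
      hδ1δ2, hδ2δ2]
    rw [dotProduct_comm δ1 z, dotProduct_comm δ2 z, hzδ1, hzδ2]
    ring
  have hQ : w ⬝ᵥ (S + ρ • vecMulVec δ δ).mulVec w
      = (∑ i : Fin k, a i * (a i * lam ⟨i.1, lt_trans i.isLt hkp⟩))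
        + c ^ 2 * (∑ i : Fin (p - k), bb i * (bb i * lam ⟨k + i.1, by omega⟩))
        + ρ * (t + c * Bv) ^ 2 := by
    rw [add_mulVec, smul_mulVec, dotProduct_add, dotProduct_smul, vecMulVec_mulVec_a6,
      dotProduct_smul, hwδ]
    have hmv : w ⬝ᵥ S.mulVec w = c ^ 2 * (δ2 ⬝ᵥ S.mulVec δ2) + z ⬝ᵥ S.mulVec z := by
      rw [hwz, mulVec_add, mulVec_smul]
      simp only [add_dotProduct, dotProduct_add, smul_dotProduct, dotProduct_smul, smul_eq_mul,
        hzSδ2, hδ2Sz]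
      ring
    have hwδ2 : w ⬝ᵥ δ = t + c * Bv := by rw [dotProduct_comm]; exact hwδ
    rw [hmv, hδ2Sδ2, hzSz, hwδ2]
    simp only [smul_eq_mul]
    ring
  -- final assembly
  have hscalar : d * ρ * Bv / (d + ρ * (A + Bv)) ≤ d * S2 + ρ * (t + c * Bv) ^ 2 :=
    scalar_core_a6 d ρ A Bv S2 c t hd hρ hAnn hBpos hS2nn hunit hcs
  have hc2 : c ^ 2 * (lam ⟨p - 1, hp1⟩ * Bv)
      ≤ c ^ 2 * ∑ i : Fin (p - k), bb i * (bb i * lam ⟨k + i.1, by omega⟩) :=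
    mul_le_mul_of_nonneg_left hsum2 (sq_nonneg c)
  have hsplit : lam ⟨p - 1, hp1⟩ * S2 + c ^ 2 * (lam ⟨p - 1, hp1⟩ * Bv) = lam ⟨p - 1, hp1⟩ := by
    linear_combination lam ⟨p - 1, hp1⟩ * hunit
  have hgoal : lam ⟨p - 1, hp1⟩ + dt ≤ w ⬝ᵥ (S + ρ • vecMulVec δ δ).mulVec w := by
    rw [hQ, hdt']
    linarith [hsum1, hc2, hscalar, hsplit]
  exact hgoal
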